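/- Let f : ℝ → ℝ be integrable and square-integrable with f ≥ 0, and suppose there exist constants C > 0 and α > 0 with f(z) ≤ C·exp(-α|z|) for all z. Then the kernel K(x,y) = ∫ f(x-u) f(y-u) du satisfies K(x,y) ≤ C' (1 + |x-y|) exp(-α|x-y|) for some constant C' > 0; in particular K(x,y) → 0 exponentially fast as |x-y| → ∞. -/

import Mathlib

/-!
Pointwise `f (x - u) * f (y - u) ≤ C² exp (-α (|x - u| + |y - u|))`. For `u` between `x` and `y`
the exponent is `-α |x - y|`; outside, it is `-α |x - y|` minus `2α` times the distance from `u`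
to the nearer endpoint. So the integrand is at most `C² exp (-α |x - y|)` times the indicator of
`[x, y]` plus two exponential tails centred at `x` and `y`, whose integral is
`|x - y| + 2 ∫ exp (-2α |u|) du`.
-/

open MeasureTheory Set Real

lemma integrable_exp_neg_mul_abs {β : ℝ} (hβ : 0 < β) :
    Integrable fun u : ℝ => exp (-β * |u|) := by
  have hIci : IntegrableOn (fun u : ℝ => exp (-β * |u|)) (Ici 0) :=
    Iff.mpr integrableOn_Ici_iff_integrableOn_Ioi <|
      (exp_neg_integrableOn_Ioi 0 hβ).congr_fun (fun u hu => by rw [abs_of_pos hu])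
        measurableSet_Ioi
  have hIic : IntegrableOn (fun u : ℝ => exp (-β * |u|)) (Iic 0) := by
    rw [← integrable_indicator_iff measurableSet_Iic]
    refine ((hIci.integrable_indicator measurableSet_Ici).comp_neg).congr
      (.of_forall fun u => ?_)
    simp [indicator_apply, abs_neg]
  simpa using hIic.union hIci

lemma abs_sub_add_abs_sub_of_mem_uIcc {x y u : ℝ} (hu : u ∈ uIcc x y) :
    |x - u| + |y - u| = |x - y| := by
  rw [mem_uIcc] at hu
  grind

lemma abs_sub_add_abs_sub_of_notMem_uIcc {x y u : ℝ} (hu : u ∉ uIcc x y) :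
    |x - u| + |y - u| = |x - y| + 2 * min |u - x| |u - y| := by
  rw [mem_uIcc] at hu
  grind

lemma integrable_indicator_one_uIcc (x y : ℝ) :
    Integrable ((uIcc x y).indicator (1 : ℝ → ℝ)) :=
  (integrable_indicator_iff measurableSet_uIcc).mpr (integrableOn_const measure_Icc_lt_top.ne)

noncomputable def plateauExpTails (β x y u : ℝ) : ℝ :=
  (uIcc x y).indicator 1 u + exp (-β * |u - x|) + exp (-β * |u - y|)

lemma integrable_plateauExpTails {β : ℝ} (hβ : 0 < β) (x y : ℝ) :
    Integrable (plateauExpTails β x y) := by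
  have h := integrable_exp_neg_mul_abs hβ
  have hI := integrable_indicator_one_uIcc x y
  exact (hI.add (h.comp_sub_right x)).add (h.comp_sub_right y)

lemma integral_plateauExpTails {β : ℝ} (hβ : 0 < β) (x y : ℝ) :
    ∫ u, plateauExpTails β x y u = |x - y| + 2 * ∫ u, exp (-β * |u|) := by
  have h := integrable_exp_neg_mul_abs hβ
  have hI := integrable_indicator_one_uIcc x y
  have hIx : Integrable fun u => (uIcc x y).indicator 1 u + exp (-β * |u - x|) :=
    hI.add (h.comp_sub_right x)
  unfold plateauExpTails
  rw [integral_add hIx (h.comp_sub_right y), integral_add hI (h.comp_sub_right x),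
    integral_indicator_one measurableSet_uIcc, Real.volume_real_interval,
    integral_sub_right_eq_self (fun u => exp (-β * |u|)),
    integral_sub_right_eq_self (fun u => exp (-β * |u|)), abs_sub_comm]
  ring

lemma exp_mul_exp_le_plateauExpTails (α x y u : ℝ) :
    exp (-α * |x - u|) * exp (-α * |y - u|) ≤
      exp (-α * |x - y|) * plateauExpTails (2 * α) x y u := by
  rw [← exp_add, ← mul_add]
  by_cases hu : u ∈ uIcc x y
  · rw [abs_sub_add_abs_sub_of_mem_uIcc hu, plateauExpTails, indicator_of_mem hu]
    refine le_mul_of_one_le_right (exp_pos _).le ?_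
    simp only [Pi.one_apply]
    linarith [exp_pos (-(2 * α) * |u - x|), exp_pos (-(2 * α) * |u - y|)]
  · rw [abs_sub_add_abs_sub_of_notMem_uIcc hu, plateauExpTails, indicator_of_notMem hu,
      zero_add, mul_add, exp_add,
      show -α * (2 * min |u - x| |u - y|) = -(2 * α) * min |u - x| |u - y| by ring]
    refine mul_le_mul_of_nonneg_left ?_ (exp_pos _).le
    rcases min_cases |u - x| |u - y| with ⟨h, _⟩ | ⟨h, _⟩ <;> rw [h]
    · linarith [exp_pos (-(2 * α) * |u - y|)]
    · linarith [exp_pos (-(2 * α) * |u - x|)]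

theorem gh_kernel_exponential_decay_general (f : ℝ → ℝ) (hpos : ∀ z, 0 ≤ f z)
    (C α : ℝ) (hC : 0 < C) (hα : 0 < α)
    (hdecay : ∀ z, f z ≤ C * Real.exp (-α * |z|))
    (K : ℝ → ℝ → ℝ) (hK : ∀ x y, K x y = ∫ u, f (x - u) * f (y - u)) :
    ∃ C' > 0, ∀ x y, K x y ≤ C' * (1 + |x - y|) * Real.exp (-α * |x - y|) := by
  have h2α : 0 < 2 * α := by linarith
  set M := ∫ u, exp (-(2 * α) * |u|)
  have hM : 0 ≤ M := integral_nonneg fun _ => (exp_pos _).le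
  refine ⟨C ^ 2 * (1 + 2 * M), by positivity, fun x y => ?_⟩
  have hprod (u : ℝ) :
      f (x - u) * f (y - u) ≤ C ^ 2 * exp (-α * |x - y|) * plateauExpTails (2 * α) x y u :=
    calc f (x - u) * f (y - u)
        ≤ (C * exp (-α * |x - u|)) * (C * exp (-α * |y - u|)) :=
          mul_le_mul (hdecay _) (hdecay _) (hpos _) (by positivity)
      _ = C ^ 2 * (exp (-α * |x - u|) * exp (-α * |y - u|)) := by ring
      _ ≤ C ^ 2 * (exp (-α * |x - y|) * plateauExpTails (2 * α) x y u) :=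
          mul_le_mul_of_nonneg_left (exp_mul_exp_le_plateauExpTails α x y u) (by positivity)
      _ = _ := (mul_assoc _ _ _).symm
  calc K x y
      ≤ ∫ u, C ^ 2 * exp (-α * |x - y|) * plateauExpTails (2 * α) x y u := by
        rw [hK]
        exact integral_mono_of_nonneg (.of_forall fun u => mul_nonneg (hpos _) (hpos _))
          ((integrable_plateauExpTails h2α x y).const_mul _) (.of_forall hprod)
    _ = C ^ 2 * exp (-α * |x - y|) * (|x - y| + 2 * M) := by
        rw [integral_const_mul, integral_plateauExpTails h2α]
    _ ≤ C ^ 2 * (1 + 2 * M) * (1 + |x - y|) * exp (-α * |x - y|) := by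
        have key : |x - y| + 2 * M ≤ (1 + 2 * M) * (1 + |x - y|) := by
          nlinarith [abs_nonneg (x - y)]
        linear_combination
          mul_le_mul_of_nonneg_left key (by positivity : 0 ≤ C ^ 2 * exp (-α * |x - y|))

theorem gh_kernel_exponential_decay (f : ℝ → ℝ) (hint : Integrable f)
    (hL2 : MemLp f 2 volume) (hpos : ∀ z, 0 ≤ f z)
    (C α : ℝ) (hC : 0 < C) (hα : 0 < α)
    (hdecay : ∀ z, f z ≤ C * Real.exp (-α * |z|))
    (K : ℝ → ℝ → ℝ) (hK : ∀ x y, K x y = ∫ u, f (x - u) * f (y - u)) :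
    ∃ C' > 0, ∀ x y, K x y ≤ C' * (1 + |x - y|) * Real.exp (-α * |x - y|) :=
  gh_kernel_exponential_decay_general f hpos C α hC hα hdecay K hK
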